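/- arXiv:2203.06101 — 2 statements merged into one kernel-verified Lean document; each statement's English description precedes it below -/
import Mathlib

section
/- Let N be a positive integer and suppose N = x·φ^m/√5 for some x ∈ [0,1) and integer m ≥ 2, where x has base-φ expansion x = ∑_{i=1}^∞ δ_i·φ^{-i} with digits δ_i ∈ {0,1}, no two consecutive digits equal to 1, and the digit sequence not ultimately 0,1,0,1,.... Then N = ∑_{i=1}^{m-1} δ_{m-i}·F_i, and this is the Zeckendorf representation of N; moreover δ_m = 0. -/
/-!
Multiplying `x = 0.δ₁δ₂…` (base φ) by `φ ^ m` splits it into `∑_{i<m} δ_{m-i} φ^i` and the tail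
`0.δ_{m+1}δ_{m+2}…`. Binet's formula `φ^i = √5 F_i + ψ^i` turns the first part into
`√5 M + ∑_{i<m} δ_{m-i} ψ^i` with `M = ∑ δ_{m-i} F_i`, so `√5 (N - M)` is the remainder
`δ_m + ∑_{0<i<m} δ_{m-i} ψ^i + tail`. As `|ψ| = φ⁻¹`, the ψ-sum and the tail are bounded by
φ-expansions without two adjacent ones; these are `< 1` (compare blockwise with `0.1010… = 1`),
and `< φ⁻¹` when their first digit is 0. If `δ_m = 1` then `δ_{m-1} = δ_{m+1} = 0`, so in every
case the remainder lies in `(δ_m - 1, 1 + 2φ⁻¹) = (δ_m - 1, √5)`. An integer multiple of `√5` in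
that interval is 0: hence `N = M`, and `δ_m - 1 < 0` forces `δ_m = 0`.
-/

open Real goldenRatio

open Finset

lemma inv_goldenRatio_pos : 0 < φ⁻¹ := inv_pos.2 goldenRatio_pos

lemma inv_goldenRatio_lt_one : φ⁻¹ < 1 := inv_lt_one_of_one_lt₀ one_lt_goldenRatio

lemma inv_goldenRatio_add_sq : φ⁻¹ + φ⁻¹ ^ 2 = 1 := by
  rw [inv_goldenRatio]
  linear_combination goldenConj_sq

lemma sqrt_five_eq_one_add_two_mul_inv_goldenRatio : √5 = 1 + 2 * φ⁻¹ := by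
  rw [inv_goldenRatio, ← goldenRatio_sub_goldenConj]
  linear_combination goldenRatio_add_goldenConj

lemma abs_goldenConj : |ψ| = φ⁻¹ := by
  rw [abs_of_neg goldenConj_neg, inv_goldenRatio]

lemma goldenRatio_pow_eq (n : ℕ) : φ ^ n = √5 * Nat.fib n + ψ ^ n := by
  rw [coe_fib_eq, mul_div_cancel₀ _ (by positivity)]
  ring

lemma hasSum_inv_goldenRatio_pow_odd : HasSum (fun k : ℕ => φ⁻¹ ^ (2 * k + 1)) 1 := by
  have hsq : φ⁻¹ ^ 2 < 1 := pow_lt_one₀ inv_goldenRatio_pos.le inv_goldenRatio_lt_one two_ne_zero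
  have h := (hasSum_geometric_of_lt_one (by positivity) hsq).mul_left φ⁻¹
  rw [← inv_goldenRatio_add_sq, add_sub_cancel_right, mul_inv_cancel₀ inv_goldenRatio_pos.ne'] at h
  simpa only [← pow_mul, ← pow_succ'] using h

lemma digit_add_digit_mul_inv_goldenRatio_le {a b : ℕ} (ha : a ≤ 1) (hb : b ≤ 1) (hab : a * b = 0) :
    (a : ℝ) + b * φ⁻¹ ≤ 1 := by
  interval_cases a <;> interval_cases b <;>
    simp only [Nat.cast_zero, Nat.cast_one, zero_mul, one_mul, zero_add, add_zero] <;>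
    first | omega | linarith [inv_goldenRatio_lt_one]

lemma Nat.eq_of_abs_sub_mul_lt {a b : ℕ} {c : ℝ} (h : |((a : ℝ) - b) * c| < c) : a = b := by
  have hc : 0 < c := (abs_nonneg _).trans_lt h
  rw [abs_mul, abs_of_pos hc, mul_lt_iff_lt_one_left hc] at h
  have h' : |(a : ℤ) - b| < 1 := by exact_mod_cast h
  have := Int.abs_lt_one_iff.1 h'
  omega

lemma abs_sum_mul_goldenConj_pow_le (s : Finset ℕ) (c : ℕ → ℕ) :
    |∑ i ∈ s, (c i : ℝ) * ψ ^ (i + 1)| ≤ ∑ i ∈ s, (c i : ℝ) * φ⁻¹ ^ (i + 1) :=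
  (abs_sum_le_sum_abs _ _).trans_eq <| sum_congr rfl fun i _ => by
    rw [abs_mul, abs_pow, abs_goldenConj, Nat.abs_cast]

lemma sum_mul_goldenRatio_pow (s : Finset ℕ) (c : ℕ → ℝ) :
    ∑ i ∈ s, c i * φ ^ i = √5 * ∑ i ∈ s, c i * Nat.fib i + ∑ i ∈ s, c i * ψ ^ i := by
  rw [mul_sum, ← sum_add_distrib]
  exact sum_congr rfl fun i _ => by rw [goldenRatio_pow_eq]; ring

-- Digits are indexed from 1, as in `0.δ₁δ₂…`; `δ 0` plays no role.
noncomputable def goldenValue (δ : ℕ → ℕ) : ℝ := ∑' i, (δ (i + 1) : ℝ) * φ⁻¹ ^ (i + 1)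

section
variable {δ : ℕ → ℕ}

lemma summable_goldenValue (hδ : ∀ i, δ i ≤ 1) :
    Summable fun i => (δ (i + 1) : ℝ) * φ⁻¹ ^ (i + 1) := by
  refine Summable.of_nonneg_of_le (fun i => by positivity) (fun i => ?_)
    ((summable_nat_add_iff 1).2 <|
      summable_geometric_of_lt_one inv_goldenRatio_pos.le inv_goldenRatio_lt_one)
  exact mul_le_of_le_one_left (by positivity) (by exact_mod_cast hδ _)

lemma goldenValue_nonneg : 0 ≤ goldenValue δ :=
  tsum_nonneg fun _ => by positivity

lemma goldenValue_eq_inv_goldenRatio_mul (hδ : ∀ i, δ i ≤ 1) :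
    goldenValue δ = φ⁻¹ * (δ 1 + goldenValue fun i => δ (i + 1)) := by
  rw [goldenValue, (summable_goldenValue hδ).tsum_eq_zero_add, goldenValue, mul_add,
    ← tsum_mul_left]
  simp only [zero_add, pow_succ]
  congr 1
  · ring
  · exact tsum_congr fun i => by ring

lemma goldenValue_lt_one (hδ : ∀ i, δ i ≤ 1) (hnc : ∀ i, 1 ≤ i → δ i * δ (i + 1) = 0)
    (hz : ∃ i, 1 ≤ i ∧ δ i = 0 ∧ δ (i + 1) = 0) : goldenValue δ < 1 := by
  set f : ℕ → ℝ := fun i => (δ (i + 1) : ℝ) * φ⁻¹ ^ (i + 1)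
  have hf : Summable f := summable_goldenValue hδ
  have hblock (k : ℕ) :
      f (2 * k) + f (2 * k + 1) = φ⁻¹ ^ (2 * k + 1) * (δ (2 * k + 1) + δ (2 * k + 2) * φ⁻¹) := by
    simp only [f]
    ring
  have hle (k : ℕ) : f (2 * k) + f (2 * k + 1) ≤ φ⁻¹ ^ (2 * k + 1) := by
    rw [hblock]
    exact mul_le_of_le_one_right (by positivity)
      (digit_add_digit_mul_inv_goldenRatio_le (hδ _) (hδ _) (hnc _ (by omega)))
  obtain ⟨j, hj⟩ : ∃ j, δ (2 * j + 1) = 0 := by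
    obtain ⟨i, hi, hi0, hi1⟩ := hz
    rcases Nat.even_or_odd' i with ⟨j, rfl | rfl⟩
    · exact ⟨j, hi1⟩
    · exact ⟨j, hi0⟩
  have hlt : f (2 * j) + f (2 * j + 1) < φ⁻¹ ^ (2 * j + 1) := by
    rw [hblock, hj, Nat.cast_zero, zero_add]
    refine mul_lt_of_lt_one_right (by positivity) ?_
    exact mul_lt_one_of_nonneg_of_lt_one_right (by exact_mod_cast hδ _) inv_goldenRatio_pos.le
      inv_goldenRatio_lt_one
  have hsplit : goldenValue δ = ∑' k, (f (2 * k) + f (2 * k + 1)) := by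
    have he : Summable fun k => f (2 * k) := hf.comp_injective (mul_right_injective₀ two_ne_zero)
    have ho : Summable fun k => f (2 * k + 1) :=
      hf.comp_injective ((add_left_injective 1).comp (mul_right_injective₀ two_ne_zero))
    rw [he.tsum_add ho, tsum_even_add_odd he ho]
    rfl
  rw [hsplit, ← hasSum_inv_goldenRatio_pow_odd.tsum_eq]
  exact Summable.tsum_lt_tsum_of_nonneg (fun k => by positivity) hle hlt
    hasSum_inv_goldenRatio_pow_odd.summable

lemma goldenValue_lt_inv_goldenRatio (hδ : ∀ i, δ i ≤ 1) (hnc : ∀ i, 1 ≤ i → δ i * δ (i + 1) = 0)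
    (h1 : δ 1 = 0) (hz : ∃ i, 2 ≤ i ∧ δ i = 0 ∧ δ (i + 1) = 0) : goldenValue δ < φ⁻¹ := by
  have hlt : (goldenValue fun i => δ (i + 1)) < 1 := by
    obtain ⟨i, hi, hi0, hi1⟩ := hz
    exact goldenValue_lt_one (fun i => hδ _) (fun i hi => hnc _ (by omega))
      ⟨i - 1, by omega, by rwa [Nat.sub_add_cancel (by omega)],
        by rwa [Nat.sub_add_cancel (by omega)]⟩
  rw [goldenValue_eq_inv_goldenRatio_mul hδ, h1, Nat.cast_zero, zero_add]
  exact mul_lt_of_lt_one_right inv_goldenRatio_pos hlt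

lemma exists_zero_pair_add (hnu : ∀ k, ∃ i, k ≤ i ∧ 1 ≤ i ∧ δ i = 0 ∧ δ (i + 1) = 0) (m k : ℕ) :
    ∃ i, k ≤ i ∧ δ (i + m) = 0 ∧ δ (i + 1 + m) = 0 := by
  obtain ⟨j, hj, -, hj0, hj1⟩ := hnu (k + m)
  exact ⟨j - m, by omega, by rwa [Nat.sub_add_cancel (by omega)],
    by rwa [show j - m + 1 + m = j + 1 by omega]⟩

lemma goldenValue_mul_pow (hδ : ∀ i, δ i ≤ 1) (m : ℕ) :
    goldenValue δ * φ ^ m =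
      ∑ i ∈ range m, (δ (m - i) : ℝ) * φ ^ i + goldenValue fun i => δ (i + m) := by
  rw [goldenValue, ← (summable_goldenValue hδ).sum_add_tsum_nat_add m, add_mul, ← tsum_mul_right,
    sum_mul, ← sum_range_reflect]
  congr 1
  · refine sum_congr rfl fun i hi => ?_
    have hi : i < m := mem_range.1 hi
    rw [show m - 1 - i + 1 = m - i by omega, mul_assoc, inv_pow, inv_mul_eq_div, div_eq_mul_inv,
      ← pow_sub₀ _ goldenRatio_ne_zero (by omega), show m - (m - i) = i by omega]
  · refine tsum_congr fun i => ?_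
    rw [show i + m + 1 = i + 1 + m by omega, pow_add, mul_assoc, mul_assoc, ← mul_pow,
      inv_mul_cancel₀ goldenRatio_ne_zero, one_pow, mul_one]

lemma sum_range_succ_digit_mul_inv_goldenRatio_pow (n : ℕ) :
    ∑ i ∈ range (n + 1), (δ (n + 1 - i) : ℝ) * φ⁻¹ ^ (i + 1) =
      φ⁻¹ * (δ (n + 1) + ∑ i ∈ range n, (δ (n - i) : ℝ) * φ⁻¹ ^ (i + 1)) := by
  rw [sum_range_succ', mul_add, mul_sum, add_comm]
  simp only [Nat.add_sub_add_right, Nat.sub_zero, pow_succ]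
  congr 1
  · ring
  · exact sum_congr rfl fun i _ => by ring

lemma sum_range_digit_mul_inv_goldenRatio_pow_lt_one (hδ : ∀ i, δ i ≤ 1)
    (hnc : ∀ i, 1 ≤ i → δ i * δ (i + 1) = 0) (n : ℕ) :
    ∑ i ∈ range n, (δ (n - i) : ℝ) * φ⁻¹ ^ (i + 1) < 1 := by
  induction n using Nat.twoStepInduction with
  | zero => simp
  | one =>
    simpa using mul_lt_one_of_nonneg_of_lt_one_right (by exact_mod_cast hδ 1)
      inv_goldenRatio_pos.le inv_goldenRatio_lt_one
  | more n ih _ =>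
    rw [sum_range_succ_digit_mul_inv_goldenRatio_pow, sum_range_succ_digit_mul_inv_goldenRatio_pow]
    set S := ∑ i ∈ range n, (δ (n - i) : ℝ) * φ⁻¹ ^ (i + 1)
    have htwo := digit_add_digit_mul_inv_goldenRatio_le (hδ (n + 1 + 1)) (hδ (n + 1))
      (by rw [mul_comm]; exact hnc (n + 1) (by omega))
    calc φ⁻¹ * (δ (n + 1 + 1) + φ⁻¹ * (δ (n + 1) + S))
        = φ⁻¹ * (δ (n + 1 + 1) + δ (n + 1) * φ⁻¹) + φ⁻¹ ^ 2 * S := by ring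
      _ < φ⁻¹ * 1 + φ⁻¹ ^ 2 * 1 :=
        add_lt_add_of_le_of_lt (mul_le_mul_of_nonneg_left htwo inv_goldenRatio_pos.le)
          (mul_lt_mul_of_pos_left ih (by positivity))
      _ = 1 := by rw [mul_one, mul_one, inv_goldenRatio_add_sq]

lemma sum_range_digit_mul_inv_goldenRatio_pow_lt_inv (hδ : ∀ i, δ i ≤ 1)
    (hnc : ∀ i, 1 ≤ i → δ i * δ (i + 1) = 0) {n : ℕ} (hn : δ n = 0) :
    ∑ i ∈ range n, (δ (n - i) : ℝ) * φ⁻¹ ^ (i + 1) < φ⁻¹ := by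
  cases n with
  | zero => simpa using inv_goldenRatio_pos
  | succ n =>
    rw [sum_range_succ_digit_mul_inv_goldenRatio_pow, hn, Nat.cast_zero, zero_add]
    exact mul_lt_of_lt_one_right inv_goldenRatio_pos
      (sum_range_digit_mul_inv_goldenRatio_pow_lt_one hδ hnc n)

end

-- The remainder `√5 (N - M)` of the proof sketch above, written for `m = n + 1`.
noncomputable def zeckendorfRemainder (δ : ℕ → ℕ) (n : ℕ) : ℝ :=
  δ (n + 1) + ∑ i ∈ range n, (δ (n - i) : ℝ) * ψ ^ (i + 1) + goldenValue fun i => δ (i + (n + 1))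

section
variable {δ : ℕ → ℕ}

lemma goldenValue_mul_goldenRatio_pow_succ (hδ : ∀ i, δ i ≤ 1) (n : ℕ) :
    goldenValue δ * φ ^ (n + 1) =
      √5 * ((∑ i ∈ Icc 1 n, δ (n + 1 - i) * Nat.fib i : ℕ) : ℝ) + zeckendorfRemainder δ n := by
  have hFib : ∑ i ∈ range (n + 1), (δ (n + 1 - i) : ℝ) * Nat.fib i =
      ((∑ i ∈ Icc 1 n, δ (n + 1 - i) * Nat.fib i : ℕ) : ℝ) := by
    push_cast
    rw [sum_range_succ', Nat.fib_zero, Nat.cast_zero, mul_zero, add_zero,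
      ← Ico_add_one_right_eq_Icc, sum_Ico_eq_sum_range, Nat.add_sub_cancel]
    exact sum_congr rfl fun i _ => by rw [add_comm 1 i]
  have hPsi : ∑ i ∈ range (n + 1), (δ (n + 1 - i) : ℝ) * ψ ^ i =
      δ (n + 1) + ∑ i ∈ range n, (δ (n - i) : ℝ) * ψ ^ (i + 1) := by
    rw [sum_range_succ', add_comm]
    simp only [Nat.add_sub_add_right, Nat.sub_zero, pow_zero, mul_one]
  rw [goldenValue_mul_pow hδ, sum_mul_goldenRatio_pow, hFib, hPsi, zeckendorfRemainder]
  ring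

lemma sub_one_lt_zeckendorfRemainder (hδ : ∀ i, δ i ≤ 1)
    (hnc : ∀ i, 1 ≤ i → δ i * δ (i + 1) = 0) (n : ℕ) :
    (δ (n + 1) : ℝ) - 1 < zeckendorfRemainder δ n := by
  have hP := neg_abs_le (∑ i ∈ range n, (δ (n - i) : ℝ) * ψ ^ (i + 1))
  have hS := (abs_sum_mul_goldenConj_pow_le (range n) fun i => δ (n - i)).trans_lt
    (sum_range_digit_mul_inv_goldenRatio_pow_lt_one hδ hnc n)
  have hT : 0 ≤ goldenValue fun i => δ (i + (n + 1)) := goldenValue_nonneg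
  rw [zeckendorfRemainder]
  linarith

lemma zeckendorfRemainder_lt_sqrt_five (hδ : ∀ i, δ i ≤ 1)
    (hnc : ∀ i, 1 ≤ i → δ i * δ (i + 1) = 0)
    (hnu : ∀ k, ∃ i, k ≤ i ∧ 1 ≤ i ∧ δ i = 0 ∧ δ (i + 1) = 0) {n : ℕ} (hn : 1 ≤ n) :
    zeckendorfRemainder δ n < √5 := by
  set P := ∑ i ∈ range n, (δ (n - i) : ℝ) * ψ ^ (i + 1)
  have hP := (le_abs_self P).trans (abs_sum_mul_goldenConj_pow_le (range n) fun i => δ (n - i))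
  have hδT : ∀ i, δ (i + (n + 1)) ≤ 1 := fun i => hδ _
  have hncT : ∀ i, 1 ≤ i → δ (i + (n + 1)) * δ (i + 1 + (n + 1)) = 0 :=
    fun i _ => by rw [add_right_comm]; exact hnc _ (by omega)
  rw [zeckendorfRemainder]
  rcases Nat.le_one_iff_eq_zero_or_eq_one.1 (hδ (n + 1)) with h | h
  · have hS := sum_range_digit_mul_inv_goldenRatio_pow_lt_one hδ hnc n
    have hT := goldenValue_lt_one hδT hncT (exists_zero_pair_add hnu _ 1)
    have h2 : (2 : ℝ) < √5 := Real.lt_sqrt (by norm_num) |>.2 (by norm_num)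
    rw [h, Nat.cast_zero]
    linarith
  · have hdn : δ n = 0 := by simpa [h] using hnc n hn
    have hdn2 : δ (1 + (n + 1)) = 0 := by
      rw [add_comm]
      simpa [h] using hnc (n + 1) (by omega)
    have hS := sum_range_digit_mul_inv_goldenRatio_pow_lt_inv hδ hnc hdn
    have hT := goldenValue_lt_inv_goldenRatio hδT hncT hdn2 (exists_zero_pair_add hnu _ 2)
    rw [h, Nat.cast_one, sqrt_five_eq_one_add_two_mul_inv_goldenRatio]
    linarith

end

theorem stmt5_general (N : ℕ) (m : ℕ) (hm : 2 ≤ m)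
    (x : ℝ)
    (d : ℕ → ℕ)
    (h01 : ∀ i, d i ≤ 1)
    (hnc : ∀ i, 1 ≤ i → d i * d (i + 1) = 0)
    (hnu : ∀ k, ∃ i, k ≤ i ∧ 1 ≤ i ∧ d i = 0 ∧ d (i + 1) = 0)
    (hexp : x = ∑' i : ℕ, (d (i + 1) : ℝ) * φ⁻¹ ^ (i + 1))
    (hNx : (N : ℝ) = x * φ ^ m / Real.sqrt 5) :
    N = (∑ i ∈ Finset.Icc 1 (m - 1), d (m - i) * Nat.fib i) ∧ d m = 0 := by
  obtain ⟨n, rfl⟩ : ∃ n, m = n + 1 := ⟨m - 1, by omega⟩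
  rw [Nat.add_sub_cancel]
  set M := ∑ i ∈ Icc 1 n, d (n + 1 - i) * Nat.fib i
  have key : ((N : ℝ) - M) * √5 = zeckendorfRemainder d n := by
    have h := goldenValue_mul_goldenRatio_pow_succ h01 n
    rw [hNx, hexp, sub_mul, div_mul_cancel₀ _ (by positivity)]
    rw [goldenValue] at h
    linear_combination h
  have hlow := sub_one_lt_zeckendorfRemainder h01 hnc n
  have hNM : N = M := by
    refine Nat.eq_of_abs_sub_mul_lt (key ▸ abs_lt.2
      ⟨?_, zeckendorfRemainder_lt_sqrt_five h01 hnc hnu (by omega)⟩)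
    linarith [sqrt_five_eq_one_add_two_mul_inv_goldenRatio, inv_goldenRatio_pos,
      Nat.cast_nonneg (α := ℝ) (d (n + 1))]
  refine ⟨hNM, ?_⟩
  rw [← key, hNM, sub_self, zero_mul, sub_lt_zero] at hlow
  exact Nat.lt_one_iff.1 (by exact_mod_cast hlow)

theorem stmt5 (N : ℕ) (hN : 0 < N) (m : ℕ) (hm : 2 ≤ m)
    (x : ℝ) (hx : x ∈ Set.Ico (0 : ℝ) 1)
    (d : ℕ → ℕ)
    (h01 : ∀ i, d i ≤ 1)
    (hnc : ∀ i, 1 ≤ i → d i * d (i + 1) = 0)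
    (hnu : ∀ k, ∃ i, k ≤ i ∧ 1 ≤ i ∧ d i = 0 ∧ d (i + 1) = 0)
    (hexp : x = ∑' i : ℕ, (d (i + 1) : ℝ) * φ⁻¹ ^ (i + 1))
    (hNx : (N : ℝ) = x * φ ^ m / Real.sqrt 5) :
    N = (∑ i ∈ Finset.Icc 1 (m - 1), d (m - i) * Nat.fib i) ∧ d m = 0 :=
  stmt5_general N m hm x d h01 hnc hnu hexp hNx
end

section
/- For every x ∈ [0,1), defining δ_i(x) = ⌊T^{(i)}(x)⌋ where T(x) = φx mod 1, the sequence (δ_i(x)) takes values in {0,1}, satisfies δ_i(x)·δ_{i+1}(x) = 0 for all i, and x = ∑_{i=1}^∞ δ_i(x)·φ^{-i}. -/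
open Real goldenRatio

/-- The map `T x = φ x mod 1` of the base-`φ` expansion. -/
noncomputable def phiMap (y : ℝ) : ℝ := Int.fract (goldenRatio * y)

/-- The `i`-th digit (for `i ≥ 1`) of the base-`φ` expansion of `x ∈ [0,1)`. -/
noncomputable def phiDigit (x : ℝ) (i : ℕ) : ℤ :=
  ⌊goldenRatio * (phiMap^[i - 1] x)⌋

/-!
Since `φ < 2`, every digit `⌊φ y⌋` of a point `y ∈ [0,1)` is `0` or `1`. A digit `1` means
`φ y ≥ 1`, so `T y = φ y - 1 < φ - 1 = φ⁻¹` and the next digit vanishes. Unwinding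
`y = (⌊φ y⌋ + T y) φ⁻¹` `n` times gives `x = ∑_{i ≤ n} δ_i φ^{-i} + T^n(x) φ^{-n}`, and the
remainder tends to `0` because `T^n(x) ∈ [0,1)`.
-/

lemma phiMap_mem_Ico (y : ℝ) : phiMap y ∈ Set.Ico (0 : ℝ) 1 :=
  ⟨Int.fract_nonneg _, Int.fract_lt_one _⟩

lemma phiMap_iterate_mem_Ico {x : ℝ} (hx : x ∈ Set.Ico (0 : ℝ) 1) :
    ∀ n, phiMap^[n] x ∈ Set.Ico (0 : ℝ) 1
  | 0 => hx
  | n + 1 => by rw [Function.iterate_succ_apply']; exact phiMap_mem_Ico _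

lemma phiDigit_succ (x : ℝ) (n : ℕ) : phiDigit x (n + 1) = ⌊φ * phiMap^[n] x⌋ := rfl

lemma floor_goldenRatio_mul_eq_zero_or_one {y : ℝ} (hy : y ∈ Set.Ico (0 : ℝ) 1) :
    ⌊φ * y⌋ = 0 ∨ ⌊φ * y⌋ = 1 := by
  have h0 : 0 ≤ ⌊φ * y⌋ := Int.floor_nonneg.2 (mul_nonneg goldenRatio_pos.le hy.1)
  have h2 : ⌊φ * y⌋ < 2 := Int.floor_lt.2 <| by
    push_cast
    nlinarith [goldenRatio_lt_two, goldenRatio_pos, hy.2]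
  omega

lemma floor_goldenRatio_mul_phiMap_eq_zero {y : ℝ} (hy : y < 1) (h : ⌊φ * y⌋ = 1) :
    ⌊φ * phiMap y⌋ = 0 := by
  have hT : phiMap y = φ * y - 1 := by
    rw [phiMap, ← Int.self_sub_floor, h, Int.cast_one]
  refine Int.floor_eq_zero_iff.2 ⟨mul_nonneg goldenRatio_pos.le (phiMap_mem_Ico y).1, ?_⟩
  rw [hT]
  nlinarith [goldenRatio_sq, goldenRatio_pos]

lemma eq_floor_add_phiMap_mul_inv (y : ℝ) : y = (⌊φ * y⌋ + phiMap y) * φ⁻¹ := by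
  rw [phiMap, Int.floor_add_fract, mul_comm, inv_mul_cancel_left₀ goldenRatio_ne_zero]

lemma phiDigit_eq_zero_or_one {x : ℝ} (hx : x ∈ Set.Ico (0 : ℝ) 1) (n : ℕ) :
    phiDigit x (n + 1) = 0 ∨ phiDigit x (n + 1) = 1 :=
  floor_goldenRatio_mul_eq_zero_or_one (phiMap_iterate_mem_Ico hx n)

lemma phiDigit_mul_phiDigit_succ {x : ℝ} (hx : x ∈ Set.Ico (0 : ℝ) 1) (n : ℕ) :
    phiDigit x (n + 1) * phiDigit x (n + 2) = 0 := by
  rcases phiDigit_eq_zero_or_one hx n with h | h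
  · rw [h, zero_mul]
  · rw [h, one_mul, phiDigit_succ x (n + 1), Function.iterate_succ_apply',
      floor_goldenRatio_mul_phiMap_eq_zero (phiMap_iterate_mem_Ico hx n).2 h]

lemma sum_range_phiDigit_add_phiMap_iterate (x : ℝ) (n : ℕ) :
    ∑ i ∈ Finset.range n, (phiDigit x (i + 1) : ℝ) * φ⁻¹ ^ (i + 1) + phiMap^[n] x * φ⁻¹ ^ n
      = x := by
  induction n with
  | zero => simp
  | succ n ih =>
    rw [Finset.sum_range_succ, Function.iterate_succ_apply', phiDigit_succ]
    linear_combination ih - φ⁻¹ ^ n * eq_floor_add_phiMap_mul_inv (phiMap^[n] x)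

lemma hasSum_phiDigit {x : ℝ} (hx : x ∈ Set.Ico (0 : ℝ) 1) :
    HasSum (fun i ↦ (phiDigit x (i + 1) : ℝ) * φ⁻¹ ^ (i + 1)) x := by
  have hq₀ : 0 ≤ φ⁻¹ := inv_nonneg.2 goldenRatio_pos.le
  have hq₁ : φ⁻¹ < 1 := inv_lt_one_of_one_lt₀ one_lt_goldenRatio
  have hnonneg (i : ℕ) : 0 ≤ (phiDigit x (i + 1) : ℝ) * φ⁻¹ ^ (i + 1) := by
    refine mul_nonneg (Int.cast_nonneg ?_) (pow_nonneg hq₀ _)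
    rcases phiDigit_eq_zero_or_one hx i with h | h <;> omega
  have hremainder : Filter.Tendsto (fun n ↦ phiMap^[n] x * φ⁻¹ ^ n) Filter.atTop (nhds 0) :=
    squeeze_zero (fun n ↦ mul_nonneg (phiMap_iterate_mem_Ico hx n).1 (pow_nonneg hq₀ n))
      (fun n ↦ mul_le_of_le_one_left (pow_nonneg hq₀ n) (phiMap_iterate_mem_Ico hx n).2.le)
      (tendsto_pow_atTop_nhds_zero_of_lt_one hq₀ hq₁)
  rw [hasSum_iff_tendsto_nat_of_nonneg hnonneg]
  have h := (tendsto_const_nhds (x := x)).sub hremainder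
  rw [sub_zero] at h
  exact h.congr fun n ↦ (eq_sub_of_add_eq (sum_range_phiDigit_add_phiMap_iterate x n)).symm

theorem stmt19 (x : ℝ) (hx : x ∈ Set.Ico (0 : ℝ) 1) :
    (∀ i, 1 ≤ i → phiDigit x i = 0 ∨ phiDigit x i = 1) ∧
    (∀ i, 1 ≤ i → phiDigit x i * phiDigit x (i + 1) = 0) ∧
    x = ∑' i : ℕ, (phiDigit x (i + 1) : ℝ) * φ⁻¹ ^ (i + 1) := by
  refine ⟨fun i hi ↦ ?_, fun i hi ↦ ?_, (hasSum_phiDigit hx).tsum_eq.symm⟩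
  · obtain ⟨n, rfl⟩ := Nat.exists_eq_add_of_le' hi
    exact phiDigit_eq_zero_or_one hx n
  · obtain ⟨n, rfl⟩ := Nat.exists_eq_add_of_le' hi
    exact phiDigit_mul_phiDigit_succ hx n
end
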